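/- Suppose every agent's valuation v_i is multilinear in PoS and every aggregation function f_i τ is multilinear on [0,1]^N. Then the trust-based PEV mechanism M^trust is ex-post truthful: for every efficient allocation choice π*, every family of pivot functions (h_i), every type profile θ, every agent i, and every report θ̂_i, EU_i(θ_i, θ_i, θ_{-i}) ≥ EU_i(θ_i, θ̂_i, θ_{-i}). -/

import Mathlib

/-- A function `f : (N → ℝ) → ℝ` is multilinear on `[0,1]^N`. -/
def MultilinearOn {N : Type*} [Fintype N] [DecidableEq N] (f : (N → ℝ) → ℝ) : Prop :=
  ∀ p : N → ℝ, (∀ j, 0 ≤ p j ∧ p j ≤ 1) → ∀ j,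
    f p = p j * f (Function.update p j 1) + (1 - p j) * f (Function.update p j 0)

/-- A valuation `v : T → (N → ℝ) → ℝ` is multilinear in PoS. -/
def MultilinearInPoS {N T : Type*} [Fintype N] [DecidableEq N]
    (v : T → (N → ℝ) → ℝ) : Prop :=
  ∀ τ : T, MultilinearOn (v τ)

/-- A type of an agent in the trust setting: a valuation together with a trust
report `t`, where `t τ j ∈ [0,1]` is the opinion of agent `j`'s probability of
successfully completing `j`'s tasks in `τ`. -/
structure TrustAgentType (N T : Type*) where
  v : T → (N → ℝ) → ℝ
  t : T → N → ℝ
  ht : ∀ τ j, 0 ≤ t τ j ∧ t τ j ≤ 1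

/-- The aggregated (true) PoS profile `ρ^τ`: coordinate `i` aggregates, via `f i τ`,
all agents' opinions about agent `i` for allocation `τ`. -/
def rho {N T : Type*} (f : N → T → (N → ℝ) → ℝ)
    (θ : N → TrustAgentType N T) (τ : T) : N → ℝ :=
  fun i => f i τ (fun j => (θ j).t τ i)

/-- The expected social welfare of allocation `τ` under type profile `θ`, with
aggregation functions `f`. -/
def TSW {N T : Type*} [Fintype N] (f : N → T → (N → ℝ) → ℝ)
    (θ : N → TrustAgentType N T) (τ : T) : ℝ :=
  ∑ i, (θ i).v τ (rho f θ τ)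

/-- An efficient allocation choice function in the trust setting. -/
def TEfficient {N T : Type*} [Fintype N] (f : N → T → (N → ℝ) → ℝ)
    (π : (N → TrustAgentType N T) → T) : Prop :=
  ∀ θ τ, TSW f θ τ ≤ TSW f θ (π θ)

/-- A family of pivot functions `h_i` depends only on the types of agents other
than `i`. -/
def TPivotIndep {N T : Type*} (h : N → (N → TrustAgentType N T) → ℝ) : Prop :=
  ∀ i θ θ', (∀ j, j ≠ i → θ j = θ' j) → h i θ = h i θ'

/-- Agent `i`'s expected utility in the trust-based PEV mechanism `M^trust` when her
true type is `θ i`, she reports `r`, and all other agents have true types `θ` and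
report truthfully. -/
noncomputable def TEU {N T : Type*} [Fintype N] [DecidableEq N]
    (f : N → T → (N → ℝ) → ℝ) (π : (N → TrustAgentType N T) → T)
    (h : N → (N → TrustAgentType N T) → ℝ)
    (θ : N → TrustAgentType N T) (i : N) (r : TrustAgentType N T) : ℝ :=
  let τ := π (Function.update θ i r)
  let ρ := rho f θ τ
  ρ i *
      ((θ i).v τ (Function.update ρ i 1) +
        ∑ j ∈ Finset.univ.erase i, (θ j).v τ (Function.update ρ i 1)) +
    (1 - ρ i) *
      ((θ i).v τ (Function.update ρ i 0) +
        ∑ j ∈ Finset.univ.erase i, (θ j).v τ (Function.update ρ i 0)) -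
    h i θ

/- By multilinearity of the valuations in agent i's coordinate, agent i's expected
utility under allocation τ is the expected social welfare SW(θ, τ) evaluated at the true PoS
profile, minus a pivot term that does not depend on i's report. Truthful reporting lets π*
maximize exactly this welfare. -/

theorem MultilinearOn.sum {N ι : Type*} [Fintype N] [DecidableEq N] (s : Finset ι)
    {g : ι → (N → ℝ) → ℝ} (hg : ∀ k ∈ s, MultilinearOn (g k)) :
    MultilinearOn (fun p => ∑ k ∈ s, g k p) := by
  intro p hp j
  simp only [Finset.mul_sum, ← Finset.sum_add_distrib]
  exact Finset.sum_congr rfl fun k hk => hg k hk p hp j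

theorem rho_mem_unitInterval {N T : Type*} {f : N → T → (N → ℝ) → ℝ}
    (hf01 : ∀ (i : N) (τ : T) (q : N → ℝ), (∀ j, 0 ≤ q j ∧ q j ≤ 1) →
      0 ≤ f i τ q ∧ f i τ q ≤ 1)
    (θ : N → TrustAgentType N T) (τ : T) (j : N) :
    0 ≤ rho f θ τ j ∧ rho f θ τ j ≤ 1 :=
  hf01 j τ _ fun k => (θ k).ht τ j

theorem TSW_eq_expect_update {N T : Type*} [Fintype N] [DecidableEq N] {f : N → T → (N → ℝ) → ℝ}
    (hf01 : ∀ (i : N) (τ : T) (q : N → ℝ), (∀ j, 0 ≤ q j ∧ q j ≤ 1) →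
      0 ≤ f i τ q ∧ f i τ q ≤ 1)
    {θ : N → TrustAgentType N T} (hml : ∀ i, MultilinearInPoS ((θ i).v)) (τ : T) (i : N) :
    TSW f θ τ =
      rho f θ τ i * ∑ j, (θ j).v τ (Function.update (rho f θ τ) i 1) +
        (1 - rho f θ τ i) * ∑ j, (θ j).v τ (Function.update (rho f θ τ) i 0) :=
  MultilinearOn.sum Finset.univ (fun j _ => hml j τ) _ (rho_mem_unitInterval hf01 θ τ) i

theorem TEU_eq_TSW_sub {N T : Type*} [Fintype N] [DecidableEq N] {f : N → T → (N → ℝ) → ℝ}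
    (hf01 : ∀ (i : N) (τ : T) (q : N → ℝ), (∀ j, 0 ≤ q j ∧ q j ≤ 1) →
      0 ≤ f i τ q ∧ f i τ q ≤ 1)
    (π : (N → TrustAgentType N T) → T) (h : N → (N → TrustAgentType N T) → ℝ)
    {θ : N → TrustAgentType N T} (hml : ∀ i, MultilinearInPoS ((θ i).v))
    (i : N) (r : TrustAgentType N T) :
    TEU f π h θ i r = TSW f θ (π (Function.update θ i r)) - h i θ := by
  rw [TSW_eq_expect_update hf01 hml, ← Finset.add_sum_erase _ _ (Finset.mem_univ i),
    ← Finset.add_sum_erase _ _ (Finset.mem_univ i)]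
  rfl

theorem trust_pev_ex_post_truthful_general {N T : Type*} [Fintype N] [DecidableEq N]
    (f : N → T → (N → ℝ) → ℝ)
    (hf01 : ∀ (i : N) (τ : T) (q : N → ℝ), (∀ j, 0 ≤ q j ∧ q j ≤ 1) →
      0 ≤ f i τ q ∧ f i τ q ≤ 1)
    (π : (N → TrustAgentType N T) → T) (hπ : TEfficient f π)
    (h : N → (N → TrustAgentType N T) → ℝ)
    (θ : N → TrustAgentType N T) (hml : ∀ i, MultilinearInPoS ((θ i).v))
    (i : N) (r : TrustAgentType N T) :
    TEU f π h θ i r ≤ TEU f π h θ i (θ i) := by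
  rw [TEU_eq_TSW_sub hf01 π h hml, TEU_eq_TSW_sub hf01 π h hml, Function.update_eq_self]
  exact sub_le_sub_right (hπ θ _) _

/-- if every agent's valuation is multilinear in PoS and every
aggregation function `f i τ` is multilinear on `[0,1]^N`, then the trust-based PEV
mechanism `M^trust` is ex-post truthful. -/
theorem trust_pev_ex_post_truthful {N T : Type*} [Fintype N] [DecidableEq N]
    [Fintype T] [Nonempty T]
    (f : N → T → (N → ℝ) → ℝ)
    (hf01 : ∀ (i : N) (τ : T) (q : N → ℝ), (∀ j, 0 ≤ q j ∧ q j ≤ 1) →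
      0 ≤ f i τ q ∧ f i τ q ≤ 1)
    (hfml : ∀ (i : N) (τ : T), MultilinearOn (f i τ))
    (π : (N → TrustAgentType N T) → T) (hπ : TEfficient f π)
    (h : N → (N → TrustAgentType N T) → ℝ) (hh : TPivotIndep h)
    (θ : N → TrustAgentType N T) (hml : ∀ i, MultilinearInPoS ((θ i).v))
    (i : N) (r : TrustAgentType N T) :
    TEU f π h θ i r ≤ TEU f π h θ i (θ i) :=
  trust_pev_ex_post_truthful_general f hf01 π hπ h θ hml i r
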